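/- Let A₁, A₂, B₁, B₂ be finite types. Let μ : Matrix ((A₂ × B₂) × (A₁ × B₁)) ((A₂ × B₂) × (A₁ × B₁)) ℂ be positive semidefinite and have positive partial transpose with respect to the B factors, i.e., the matrix μ^{T_B} defined by μ^{T_B} ((a₂,b₂),(a₁,b₁)) ((a₂',b₂'),(a₁',b₁')) = μ ((a₂,b₂'),(a₁,b₁')) ((a₂',b₂),(a₁',b₁)) is positive semidefinite. Let ρ : Matrix (A₁ × B₁) (A₁ × B₁) ℂ be positive semidefinite with positive partial transpose on A₁, i.e., the matrix ρ^{T_{A₁}} defined by ρ^{T_{A₁}} (a,b) (a',b') = ρ (a',b) (a,b') is positive semidefinite. Then the partial transpose on B₂ of the link product, namely the matrix (a₂,b₂) (a₂',b₂') ↦ (μ ⋆ ρ) (a₂,b₂') (a₂',b₂), is positive semidefinite. (States with positive partial transpose are closed under the link product; this makes the resource theory of NPT entanglement Choi-defined.) -/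

import Mathlib

/-!
Writing `ρ = Cᴴ C` as a sum of rank-one states `v̄ vᵀ`, the link product `N ⋆ (v̄ vᵀ)` is the
compression `Bᴴ N B` along the map `B : s ↦ s ⊗ v`, so the link product of positive
semidefinite matrices is positive semidefinite. Transposing `μ ⋆ ρ` on `B₂` is the same as taking
the link product of `μ^{T_B}` with `ρ^{T_{B₁}} = (ρ^{T_{A₁}})ᵀ`, both of which are positive
semidefinite.
-/

open Matrix Kronecker BigOperators
open scoped ComplexOrder

/-- Link product of a bipartite matrix with a state. -/
noncomputable def linkState {S T : Type*} [Fintype T] (N : Matrix (S × T) (S × T) ℂ)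
    (ρ : Matrix T T ℂ) : Matrix S S ℂ :=
  Matrix.of fun s s' => ∑ t, ∑ t', N (s, t) (s', t') * ρ t t'

theorem Matrix.conjTranspose_mul_self_eq_sum_vecMulVec {m n R : Type*} [Fintype m]
    [NonUnitalSemiring R] [StarRing R] (C : Matrix m n R) : Cᴴ * C = ∑ k, vecMulVec (star (C k)) (C k) := by
  ext t t'
  simp [mul_apply, vecMulVec_apply, sum_apply]

section LinkState

variable {S T : Type*} [Fintype T]

theorem linkState_sum {ι : Type*} (N : Matrix (S × T) (S × T) ℂ) (s : Finset ι)
    (ρ : ι → Matrix T T ℂ) : linkState N (∑ i ∈ s, ρ i) = ∑ i ∈ s, linkState N (ρ i) := by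
  ext a b
  simp only [linkState, of_apply, Matrix.sum_apply, Finset.mul_sum]
  exact (Finset.sum_congr rfl fun _ _ => Finset.sum_comm).trans Finset.sum_comm

theorem linkState_vecMulVec_star_self_posSemidef [Fintype S] {N : Matrix (S × T) (S × T) ℂ}
    (hN : N.PosSemidef) (v : T → ℂ) : (linkState N (vecMulVec (star v) v)).PosSemidef := by
  classical
  let B : Matrix (S × T) S ℂ := of fun p s => if p.1 = s then v p.2 else 0
  have hcompress : linkState N (vecMulVec (star v) v) = Bᴴ * N * B := by
    ext s s'
    simp only [B, linkState, vecMulVec_apply, Pi.star_apply, RCLike.star_def, of_apply, mul_apply,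
      conjTranspose_apply, apply_ite, star_zero, ite_mul, zero_mul, Fintype.sum_prod_type,
      Finset.sum_ite_irrel, Finset.sum_const_zero, Finset.sum_ite_eq', Finset.mem_univ,
      ↓reduceIte, Finset.sum_mul, mul_zero]
    rw [Finset.sum_comm]
    exact Finset.sum_congr rfl fun _ _ => Finset.sum_congr rfl fun _ _ => by ring
  rw [hcompress]
  exact hN.conjTranspose_mul_mul_same B

theorem linkState_posSemidef [Fintype S] {N : Matrix (S × T) (S × T) ℂ} {ρ : Matrix T T ℂ}
    (hN : N.PosSemidef) (hρ : ρ.PosSemidef) : (linkState N ρ).PosSemidef := by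
  obtain ⟨C, rfl⟩ : ∃ C : Matrix T T ℂ, ρ = star C * C := by
    classical
    open MatrixOrder in exact CStarAlgebra.nonneg_iff_eq_star_mul_self.mp hρ.nonneg
  rw [star_eq_conjTranspose, conjTranspose_mul_self_eq_sum_vecMulVec, linkState_sum]
  exact posSemidef_sum _ fun k _ => linkState_vecMulVec_star_self_posSemidef hN (C k)

end LinkState

theorem linkState_partialTranspose {A₁ A₂ B₁ B₂ : Type*} [Fintype A₁] [Fintype B₁]
    (μ : Matrix ((A₂ × B₂) × (A₁ × B₁)) ((A₂ × B₂) × (A₁ × B₁)) ℂ)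
    (ρ : Matrix (A₁ × B₁) (A₁ × B₁) ℂ) :
    (of fun p q : A₂ × B₂ => linkState μ ρ (p.1, q.2) (q.1, p.2)) =
      linkState (of fun p q : (A₂ × B₂) × (A₁ × B₁) =>
          μ ((p.1.1, q.1.2), (p.2.1, q.2.2)) ((q.1.1, p.1.2), (q.2.1, p.2.2)))
        (of fun p q : A₁ × B₁ => ρ (p.1, q.2) (q.1, p.2)) := by
  ext p q
  simp only [linkState, of_apply, Fintype.sum_prod_type]
  refine Finset.sum_congr rfl fun _ _ => ?_
  exact Finset.sum_comm.trans ((Finset.sum_congr rfl fun _ _ => Finset.sum_comm).trans Finset.sum_comm)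

theorem stmt12_general {A₁ A₂ B₁ B₂ : Type*} [Fintype A₁] [Fintype A₂] [Fintype B₁] [Fintype B₂]
    (μ : Matrix ((A₂ × B₂) × (A₁ × B₁)) ((A₂ × B₂) × (A₁ × B₁)) ℂ)
    (hμTB : (Matrix.of fun p q : (A₂ × B₂) × (A₁ × B₁) =>
        μ ((p.1.1, q.1.2), (p.2.1, q.2.2)) ((q.1.1, p.1.2), (q.2.1, p.2.2))).PosSemidef)
    (ρ : Matrix (A₁ × B₁) (A₁ × B₁) ℂ)
    (hρTA : (Matrix.of fun p q : A₁ × B₁ =>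
        ρ (q.1, p.2) (p.1, q.2)).PosSemidef) :
    (Matrix.of fun p q : A₂ × B₂ =>
        linkState μ ρ (p.1, q.2) (q.1, p.2)).PosSemidef := by
  rw [linkState_partialTranspose]
  exact linkState_posSemidef hμTB hρTA.transpose

theorem stmt12 {A₁ A₂ B₁ B₂ : Type*} [Fintype A₁] [Fintype A₂] [Fintype B₁] [Fintype B₂]
    (μ : Matrix ((A₂ × B₂) × (A₁ × B₁)) ((A₂ × B₂) × (A₁ × B₁)) ℂ)
    (hμ : μ.PosSemidef)
    (hμTB : (Matrix.of fun p q : (A₂ × B₂) × (A₁ × B₁) =>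
        μ ((p.1.1, q.1.2), (p.2.1, q.2.2)) ((q.1.1, p.1.2), (q.2.1, p.2.2))).PosSemidef)
    (ρ : Matrix (A₁ × B₁) (A₁ × B₁) ℂ) (hρ : ρ.PosSemidef)
    (hρTA : (Matrix.of fun p q : A₁ × B₁ =>
        ρ (q.1, p.2) (p.1, q.2)).PosSemidef) :
    (Matrix.of fun p q : A₂ × B₂ =>
        linkState μ ρ (p.1, q.2) (q.1, p.2)).PosSemidef :=
  stmt12_general μ hμTB ρ hρTA
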